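/- Fix ℏ > 0, a real a ≠ 0, and a smooth function Φ : ℝ → ℝ. Let T(x',p') = (−a p' − a Φ'(x'), a^{-1} x') and define U on Schwartz functions by (Uφ)(x') = (2πℏ|a|)^{-1/2} e^{−(i/ℏ)Φ(x')} ∫_ℝ φ(x) e^{−(i/ℏ) a^{-1} x x'} dx. Then for all Schwartz functions φ, ψ and all (x', p') ∈ ℝ²: W(φ, ψ)(T(x', p')) = (2πℏ)^{-1/2} ∫_ℝ e^{(i/ℏ)( Φ(x' + y/2) − Φ(x' − y/2) − Φ'(x') y )} conj(Uφ)(x' − y/2) (Uψ)(x' + y/2) e^{−i p' y/ℏ} dy. That is, the Wigner-type transform composed with the nonlinear canonical transformation T equals the Wigner-type transform of the transformed states corrected by the gauge isomorphism S_T, which acts on such integrals as multiplication of the y-integrand by the phase e^{(i/ℏ)(Φ(x'+y/2) − Φ(x'−y/2) − Φ'(x')y)}. -/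

import Mathlib

open Complex Real MeasureTheory SchwartzMap
open scoped FourierTransform

/-- The Wigner-type transform (twisted tensor product `φ* ⊗_M ψ`):
`W(φ,ψ)(x,p) = (2πℏ)^{-1/2} ∫ conj(φ)(x − y/2) ψ(x + y/2) e^{−ipy/ℏ} dy`. -/
noncomputable def Wig (ℏ : ℝ) (φ ψ : ℝ → ℂ) (x p : ℝ) : ℂ :=
  ((Real.sqrt (2 * π * ℏ) : ℝ) : ℂ)⁻¹ *
    ∫ y : ℝ, (starRingEnd ℂ) (φ (x - y / 2)) * ψ (x + y / 2) *
      Complex.exp (-(Complex.I) * ((p * y : ℝ) : ℂ) / (ℏ : ℂ))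

/-- The unitary operator associated with the quantum canonical transformation
`T(x',p') = (−ap' − aΦ'(x'), a⁻¹x')` generated by `F(x,x') = a⁻¹xx' + Φ(x')`:
`(Uφ)(x') = (2πℏ|a|)^{-1/2} e^{−(i/ℏ)Φ(x')} ∫ φ(x) e^{−(i/ℏ)a⁻¹xx'} dx`. -/
noncomputable def Unl (ℏ a : ℝ) (Φ : ℝ → ℝ) (φ : ℝ → ℂ) : ℝ → ℂ := fun x' =>
  ((Real.sqrt (2 * π * ℏ * |a|) : ℝ) : ℂ)⁻¹ *
    Complex.exp (-(Complex.I / (ℏ : ℂ)) * ((Φ x' : ℝ) : ℂ)) *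
      ∫ x : ℝ, φ x * Complex.exp (-(Complex.I / (ℏ : ℂ)) * ((a⁻¹ * x * x' : ℝ) : ℂ))

open Complex Real MeasureTheory SchwartzMap
open scoped FourierTransform

noncomputable def ee (r : ℝ) : ℂ := Complex.exp (r * Complex.I)

lemma ee_add (r s : ℝ) : ee (r + s) = ee r * ee s := by
  simp [ee, ← Complex.exp_add]; ring_nf

lemma ee_conj (r : ℝ) : (starRingEnd ℂ) (ee r) = ee (-r) := by
  simp [ee, ← Complex.exp_conj]

lemma ee_norm (r : ℝ) : ‖ee r‖ = 1 := Complex.norm_exp_ofReal_mul_I r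

lemma continuous_ee : Continuous ee :=
  Complex.continuous_exp.comp (by continuity)

lemma fourier_explicit (f : ℝ → ℂ) (w : ℝ) :
    𝓕 f w = ∫ v : ℝ, f v * ee (-(2 * π * v * w)) := by
  rw [Real.fourier_real_eq_integral_exp_smul]
  congr 1; ext v
  simp only [smul_eq_mul, RCLike.inner_apply, conj_trivial, ee]
  push_cast
  ring_nf

lemma conj_fourier (f : ℝ → ℂ) (w : ℝ) :
    (starRingEnd ℂ) (𝓕 f w) = ∫ v : ℝ, (starRingEnd ℂ) (f v) * ee (2 * π * v * w) := by
  rw [fourier_explicit, ← integral_conj]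
  congr 1; ext v
  rw [map_mul, ee_conj, neg_neg]

lemma fourier_integrable (ψ : SchwartzMap ℝ ℂ) : Integrable (𝓕 ⇑ψ) := by
  rw [← SchwartzMap.fourier_coe]
  exact (SchwartzMap.fourierTransformCLM ℂ ψ).integrable

lemma double_fourier (ψ : SchwartzMap ℝ ℂ) (u : ℝ) : 𝓕 (𝓕 ⇑ψ) u = ψ (-u) := by
  have h := Real.fourierInv_eq_fourier_neg (𝓕 ⇑ψ) (-u)
  rw [neg_neg] at h
  rw [← h, Continuous.fourierInv_fourier_eq ψ.continuous ψ.integrable (fourier_integrable ψ)]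

lemma inner_t (ψ : SchwartzMap ℝ ℂ) (ξ c : ℝ) :
    ∫ t : ℝ, 𝓕 ⇑ψ (ξ + t / 2) * ee (-(2 * π * c * t))
      = (2 : ℂ) * ee (4 * π * c * ξ) * ψ (-(2 * c)) := by
  set F : ℝ → ℂ := fun t => 𝓕 ⇑ψ (ξ + t / 2) * ee (-(2 * π * c * t)) with hF
  have h1 : (∫ t : ℝ, F (2 * t)) = |(2 : ℝ)⁻¹| • ∫ t, F t :=
    MeasureTheory.Measure.integral_comp_mul_left F 2
  have h2 : ((2 : ℂ) * ∫ t : ℝ, F (2 * t)) = ∫ t : ℝ, F t := by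
    rw [h1, abs_of_pos (by norm_num : (0:ℝ) < 2⁻¹), real_smul]
    push_cast
    ring
  rw [← h2]
  set H : ℝ → ℂ := fun u => 𝓕 ⇑ψ u * ee (-(2 * π * u * (2 * c))) * ee (4 * π * c * ξ) with hH
  have h3 : ∀ t : ℝ, F (2 * t) = H (t + ξ) := by
    intro t
    simp only [hF, hH]
    conv_rhs => rw [mul_assoc, ← ee_add]
    congr 1
    · congr 1; ring
    · congr 1; ring
  simp only [h3]
  rw [MeasureTheory.integral_add_right_eq_self H ξ]
  have h4 : (∫ u : ℝ, H u) = (∫ u : ℝ, 𝓕 ⇑ψ u * ee (-(2 * π * u * (2 * c)))) * ee (4 * π * c * ξ) := by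
    simp only [hH]; exact integral_mul_const _ _
  rw [h4, ← fourier_explicit, double_fourier]
  ring

lemma key_lemma (φ ψ : SchwartzMap ℝ ℂ) (ξ q : ℝ) :
    ∫ t : ℝ, (starRingEnd ℂ) (𝓕 ⇑φ (ξ - t / 2)) * 𝓕 ⇑ψ (ξ + t / 2) * ee (-(2 * π * q * t))
      = ∫ s : ℝ, (starRingEnd ℂ) (φ (-q - s / 2)) * ψ (-q + s / 2) * ee (-(2 * π * ξ * s)) := by
  set ψ' : SchwartzMap ℝ ℂ := SchwartzMap.fourierTransformCLM ℂ ψ with hψ'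
  have hψ'app : ∀ u : ℝ, 𝓕 ⇑ψ u = ψ' u := by
    intro u; rw [hψ', SchwartzMap.fourierTransformCLM_apply, SchwartzMap.fourier_coe]
  set G : ℝ → ℝ → ℂ := fun t x =>
    ((starRingEnd ℂ) (φ x) * ee (2 * π * x * (ξ - t / 2))) * (ψ' (ξ + t / 2) * ee (-(2 * π * q * t)))
    with hG
  -- Step 1: rewrite LHS as iterated integral
  have h1 : ∀ t : ℝ,
      (starRingEnd ℂ) (𝓕 ⇑φ (ξ - t / 2)) * 𝓕 ⇑ψ (ξ + t / 2) * ee (-(2 * π * q * t))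
        = ∫ x : ℝ, G t x := by
    intro t
    rw [conj_fourier, hψ'app, mul_assoc, ← integral_mul_const]
  -- Step 2: integrability on the product space
  have hInt1 : Integrable (fun t : ℝ => ψ' (ξ + t / 2)) :=
    (ψ'.integrable.comp_add_left ξ).comp_div two_ne_zero
  have hIntG : Integrable (Function.uncurry G) ((volume : Measure ℝ).prod volume) := by
    apply Integrable.mono' (hInt1.norm.mul_prod φ.integrable.norm)
    · apply Continuous.aestronglyMeasurable
      apply Continuous.mul
      · exact ((Complex.continuous_conj.comp (φ.continuous.comp continuous_snd)).mul
          (continuous_ee.comp (by continuity)))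
      · exact ((ψ'.continuous.comp (by continuity)).mul (continuous_ee.comp (by continuity)))
    · filter_upwards with z
      simp only [Function.uncurry, hG, norm_mul, ee_norm, mul_one]
      rw [RCLike.norm_conj]
      exact le_of_eq (mul_comm _ _)
  simp only [h1]
  rw [integral_integral_swap hIntG]
  -- Step 3: compute inner t-integral
  have h2 : ∀ x : ℝ, (∫ t : ℝ, G t x)
      = (starRingEnd ℂ) (φ x) * ψ (-(2 * (q + x / 2)))
          * ((2 : ℂ) * ee (2 * π * x * ξ + 4 * π * (q + x / 2) * ξ)) := by
    intro x
    have e1 : ∀ t : ℝ, G t x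
        = ((starRingEnd ℂ) (φ x) * ee (2 * π * x * ξ))
            * (ψ' (ξ + t / 2) * ee (-(2 * π * (q + x / 2) * t))) := by
      intro t
      simp only [hG]
      rw [show ((starRingEnd ℂ) (φ x) * ee (2 * π * x * (ξ - t / 2))) * (ψ' (ξ + t / 2) * ee (-(2 * π * q * t)))
          = (starRingEnd ℂ) (φ x) * ψ' (ξ + t / 2) * (ee (2 * π * x * (ξ - t / 2)) * ee (-(2 * π * q * t))) by ring,
        show ((starRingEnd ℂ) (φ x) * ee (2 * π * x * ξ)) * (ψ' (ξ + t / 2) * ee (-(2 * π * (q + x / 2) * t)))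
          = (starRingEnd ℂ) (φ x) * ψ' (ξ + t / 2) * (ee (2 * π * x * ξ) * ee (-(2 * π * (q + x / 2) * t))) by ring,
        ← ee_add, ← ee_add]
      congr 2
      ring
    simp only [e1]
    rw [integral_const_mul]
    simp only [← hψ'app]
    rw [inner_t ψ ξ (q + x / 2)]
    rw [show ee (2 * π * x * ξ + 4 * π * (q + x / 2) * ξ) = ee (2 * π * x * ξ) * ee (4 * π * (q + x / 2) * ξ) from ee_add _ _]
    ring
  simp only [h2]
  -- Step 4: change of variables x = -q - s/2
  set f : ℝ → ℂ := fun x => (starRingEnd ℂ) (φ x) * ψ (-(2 * (q + x / 2)))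
      * ((2 : ℂ) * ee (2 * π * x * ξ + 4 * π * (q + x / 2) * ξ)) with hf
  have h5 : (∫ s : ℝ, f (-2⁻¹ * s - q)) = (2 : ℝ) • ∫ x, f x := by
    have := MeasureTheory.Measure.integral_comp_mul_left (fun u : ℝ => f (u - q)) (-2⁻¹)
    rw [this, integral_sub_right_eq_self f q]
    norm_num
  have h6 : ∀ s : ℝ, (starRingEnd ℂ) (φ (-q - s / 2)) * ψ (-q + s / 2) * ee (-(2 * π * ξ * s))
      = (2 : ℂ)⁻¹ * f (-2⁻¹ * s - q) := by
    intro s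
    simp only [hf]
    rw [show -2⁻¹ * s - q = -q - s / 2 by ring]
    rw [show -(2 * (q + (-q - s / 2) / 2)) = -q + s / 2 by ring]
    rw [show 2 * π * (-q - s / 2) * ξ + 4 * π * (q + (-q - s / 2) / 2) * ξ = -(2 * π * ξ * s) by ring]
    ring
  calc (∫ x : ℝ, f x)
      = (2 : ℂ)⁻¹ * ∫ s : ℝ, f (-2⁻¹ * s - q) := by
        rw [h5, real_smul]; push_cast; ring
    _ = ∫ s : ℝ, (starRingEnd ℂ) (φ (-q - s / 2)) * ψ (-q + s / 2) * ee (-(2 * π * ξ * s)) := by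
        rw [← integral_const_mul]
        congr 1; ext s
        rw [h6 s]

section Main

variable {ℏ a : ℝ}

lemma expA (hℏ : ℏ ≠ 0) (r : ℝ) :
    Complex.exp ((Complex.I / (ℏ : ℂ)) * ((r : ℝ) : ℂ)) = ee (r / ℏ) := by
  rw [ee]; congr 1; push_cast
  field_simp

lemma expB (hℏ : ℏ ≠ 0) (r : ℝ) :
    Complex.exp (-(Complex.I / (ℏ : ℂ)) * ((r : ℝ) : ℂ)) = ee (-(r / ℏ)) := by
  rw [ee]; congr 1; push_cast
  field_simp

lemma expC (hℏ : ℏ ≠ 0) (r : ℝ) :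
    Complex.exp (-Complex.I * ((r : ℝ) : ℂ) / (ℏ : ℂ)) = ee (-(r / ℏ)) := by
  rw [ee]; congr 1; push_cast
  field_simp

lemma unl_inner (hℏ : ℏ ≠ 0) (ha : a ≠ 0) (f : ℝ → ℂ) (u : ℝ) :
    (∫ x : ℝ, f x * Complex.exp (-(Complex.I / (ℏ : ℂ)) * ((a⁻¹ * x * u : ℝ) : ℂ)))
      = 𝓕 f (u / (2 * π * a * ℏ)) := by
  rw [fourier_explicit]
  congr 1; ext x
  congr 1
  rw [expB hℏ, ee]
  congr 2
  have hπc : (π : ℂ) ≠ 0 := Complex.ofReal_ne_zero.mpr Real.pi_ne_zero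
  have hac : (a : ℂ) ≠ 0 := Complex.ofReal_ne_zero.mpr ha
  have hℏc : (ℏ : ℂ) ≠ 0 := Complex.ofReal_ne_zero.mpr hℏ
  field_simp

lemma unl_eq (hℏ : ℏ ≠ 0) (ha : a ≠ 0) (Φ : ℝ → ℝ) (f : ℝ → ℂ) (u : ℝ) :
    Unl ℏ a Φ f u
      = ((Real.sqrt (2 * π * ℏ * |a|) : ℝ) : ℂ)⁻¹ * ee (-(Φ u / ℏ))
          * 𝓕 f (u / (2 * π * a * ℏ)) := by
  rw [Unl, unl_inner hℏ ha, expB hℏ]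

lemma conj_unl_eq (hℏ : ℏ ≠ 0) (ha : a ≠ 0) (Φ : ℝ → ℝ) (f : ℝ → ℂ) (u : ℝ) :
    (starRingEnd ℂ) (Unl ℏ a Φ f u)
      = ((Real.sqrt (2 * π * ℏ * |a|) : ℝ) : ℂ)⁻¹ * ee (Φ u / ℏ)
          * (starRingEnd ℂ) (𝓕 f (u / (2 * π * a * ℏ))) := by
  rw [unl_eq hℏ ha, map_mul, map_mul, map_inv₀, Complex.conj_ofReal, ee_conj, neg_neg]

end Main

/-- For ℏ > 0, `a ≠ 0`, smooth `Φ : ℝ → ℝ` and Schwartz `φ, ψ`: with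
`T(x',p') = (−ap' − aΦ'(x'), a⁻¹x')`, the Wigner-type transform composed with `T`
equals the Wigner-type transform of the transformed states corrected by the gauge
isomorphism `S_T`, which multiplies the `y`-integrand by the phase
`e^{(i/ℏ)(Φ(x'+y/2) − Φ(x'−y/2) − Φ'(x')y)}`:
`W(φ,ψ)(T(x',p')) = (2πℏ)^{-1/2} ∫ e^{(i/ℏ)(Φ(x'+y/2)−Φ(x'−y/2)−Φ'(x')y)}
conj(Uφ)(x'−y/2)(Uψ)(x'+y/2) e^{−ip'y/ℏ} dy`. -/
theorem wigner_covariance_nonlinear (ℏ a : ℝ) (hℏ : 0 < ℏ) (ha : a ≠ 0)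
    (Φ : ℝ → ℝ) (hΦ : ContDiff ℝ (⊤ : ℕ∞) Φ) (φ ψ : SchwartzMap ℝ ℂ) :
    ∀ x' p' : ℝ,
      Wig ℏ ⇑φ ⇑ψ (-a * p' - a * deriv Φ x') (a⁻¹ * x')
        = ((Real.sqrt (2 * π * ℏ) : ℝ) : ℂ)⁻¹ *
          ∫ y : ℝ,
            Complex.exp ((Complex.I / (ℏ : ℂ)) *
              ((Φ (x' + y / 2) - Φ (x' - y / 2) - deriv Φ x' * y : ℝ) : ℂ)) *
            (starRingEnd ℂ) (Unl ℏ a Φ ⇑φ (x' - y / 2)) * Unl ℏ a Φ ⇑ψ (x' + y / 2) *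
            Complex.exp (-(Complex.I) * ((p' * y : ℝ) : ℂ) / (ℏ : ℂ)) := by
  intro x' p'
  have hℏ' : ℏ ≠ 0 := ne_of_gt hℏ
  have hπ : π ≠ 0 := Real.pi_ne_zero
  set D : ℝ := deriv Φ x' with hD
  set b : ℝ := 2 * π * a * ℏ with hb
  have hbne : b ≠ 0 := by
    simp only [hb]
    positivity
  set ξ : ℝ := x' / b with hξ
  set P : ℝ := p' + D with hP
  set q : ℝ := a * P with hq
  set Cc : ℂ := ((Real.sqrt (2 * π * ℏ * |a|) : ℝ) : ℂ)⁻¹ with hCc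
  set g : ℝ → ℂ := fun y =>
    (starRingEnd ℂ) (𝓕 ⇑φ ((x' - y / 2) / b)) * 𝓕 ⇑ψ ((x' + y / 2) / b) * ee (-(P * y / ℏ))
    with hg
  -- pointwise identity for the RHS integrand
  have hPoint : ∀ y : ℝ,
      Complex.exp ((Complex.I / (ℏ : ℂ)) *
          ((Φ (x' + y / 2) - Φ (x' - y / 2) - D * y : ℝ) : ℂ)) *
        (starRingEnd ℂ) (Unl ℏ a Φ ⇑φ (x' - y / 2)) * Unl ℏ a Φ ⇑ψ (x' + y / 2) *
        Complex.exp (-(Complex.I) * ((p' * y : ℝ) : ℂ) / (ℏ : ℂ))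
      = Cc * Cc * g y := by
    intro y
    rw [expA hℏ', expC hℏ', conj_unl_eq hℏ' ha, unl_eq hℏ' ha]
    simp only [hg, ← hCc]
    rw [show -(P * y / ℏ) = (Φ (x' + y / 2) - Φ (x' - y / 2) - D * y) / ℏ
        + (Φ (x' - y / 2) / ℏ + (-(Φ (x' + y / 2) / ℏ) + -(p' * y / ℏ))) by
      rw [hP]; ring]
    simp only [ee_add]
    ring
  -- the right-hand side
  rw [show (∫ y : ℝ,
        Complex.exp ((Complex.I / (ℏ : ℂ)) *
          ((Φ (x' + y / 2) - Φ (x' - y / 2) - deriv Φ x' * y : ℝ) : ℂ)) *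
        (starRingEnd ℂ) (Unl ℏ a Φ ⇑φ (x' - y / 2)) * Unl ℏ a Φ ⇑ψ (x' + y / 2) *
        Complex.exp (-(Complex.I) * ((p' * y : ℝ) : ℂ) / (ℏ : ℂ)))
      = ∫ y : ℝ, Cc * Cc * g y by
    congr 1; ext y; exact hPoint y]
  rw [integral_const_mul]
  -- change of variables y = b * t
  have hcov : (∫ y : ℝ, g y) = ((|b| : ℝ) : ℂ) * ∫ t : ℝ, g (b * t) := by
    rw [MeasureTheory.Measure.integral_comp_mul_left g b, real_smul, ← mul_assoc,
      ← Complex.ofReal_mul, abs_inv, mul_inv_cancel₀ (abs_ne_zero.mpr hbne),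
      Complex.ofReal_one, one_mul]
  have hgbt : ∀ t : ℝ, g (b * t)
      = (starRingEnd ℂ) (𝓕 ⇑φ (ξ - t / 2)) * 𝓕 ⇑ψ (ξ + t / 2) * ee (-(2 * π * q * t)) := by
    intro t
    simp only [hg]
    rw [show (x' - b * t / 2) / b = ξ - t / 2 by
        rw [hξ, sub_div, show b * t / 2 = b * (t / 2) by ring, mul_div_cancel_left₀ _ hbne],
      show (x' + b * t / 2) / b = ξ + t / 2 by
        rw [hξ, add_div, show b * t / 2 = b * (t / 2) by ring, mul_div_cancel_left₀ _ hbne],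
      show -(P * (b * t) / ℏ) = -(2 * π * q * t) by
        rw [hq, hb, show P * (2 * π * a * ℏ * t) / ℏ = 2 * π * (a * P) * t * (ℏ / ℏ) by ring,
          div_self hℏ', mul_one]]
  rw [hcov]
  simp only [hgbt]
  rw [key_lemma φ ψ ξ q]
  -- the left-hand side
  rw [Wig]
  have hLHS : ∀ y : ℝ,
      (starRingEnd ℂ) (φ (-a * p' - a * deriv Φ x' - y / 2)) * ψ (-a * p' - a * deriv Φ x' + y / 2) *
        Complex.exp (-(Complex.I) * ((a⁻¹ * x' * y : ℝ) : ℂ) / (ℏ : ℂ))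
      = (starRingEnd ℂ) (φ (-q - y / 2)) * ψ (-q + y / 2) * ee (-(2 * π * ξ * y)) := by
    intro y
    rw [expC hℏ',
      show -a * p' - a * deriv Φ x' = -q by rw [hq, hP, hD]; ring,
      show -(a⁻¹ * x' * y / ℏ) = -(2 * π * ξ * y) by rw [hξ, hb]; field_simp [hℏ', ha]]
  simp only [hD, hLHS]
  -- match the constants
  have hre : (Real.sqrt (2 * π * ℏ * |a|))⁻¹ * (Real.sqrt (2 * π * ℏ * |a|))⁻¹ * |b| = 1 := by
    rw [← mul_inv, Real.mul_self_sqrt (by positivity), hb,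
      inv_mul_eq_one₀ (by positivity)]
    rw [abs_mul, abs_mul, abs_mul, abs_of_pos hℏ, abs_of_pos Real.pi_pos,
      abs_of_pos (by norm_num : (0:ℝ) < 2)]
    ring
  have hconst : Cc * Cc * ((|b| : ℝ) : ℂ) = 1 := by
    rw [hCc, ← Complex.ofReal_inv, ← Complex.ofReal_mul, ← Complex.ofReal_mul, hre,
      Complex.ofReal_one]
  rw [← mul_assoc (Cc * Cc) _ _, hconst, one_mul]
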